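/- Let H be a real Hilbert space and x, t ∈ H with x ≠ 0 and x − t ≠ 0. Then ‖s(x−t)⊗s(x−t) − s(x)⊗s(x)‖²_F ≤ 4‖t‖²/‖x−t‖², where s(u) = u/‖u‖. -/

import Mathlib

open scoped RealInnerProductSpace

/-- The rank-one operator `u ⊗ v : w ↦ ⟨v, w⟩ u`. -/
noncomputable def rankOne {H : Type*} [NormedAddCommGroup H] [InnerProductSpace ℝ H]
    (u v : H) : H →L[ℝ] H := (innerSL ℝ v).smulRight u

/-- The spatial sign `s(u) = u / ‖u‖` (with `s(0) = 0`). -/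
noncomputable def sgn {H : Type*} [NormedAddCommGroup H] [InnerProductSpace ℝ H]
    (u : H) : H := ‖u‖⁻¹ • u

/-- Squared Hilbert–Schmidt norm relative to a Hilbert basis `b`. -/
noncomputable def hsNormSq {H ι : Type*} [NormedAddCommGroup H] [InnerProductSpace ℝ H]
    (b : HilbertBasis ι ℝ H) (A : H →L[ℝ] H) : ℝ := ∑' i, ‖A (b i)‖ ^ 2

/-- Hilbert–Schmidt norm relative to a Hilbert basis `b`. -/
noncomputable def hsNorm {H ι : Type*} [NormedAddCommGroup H] [InnerProductSpace ℝ H]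
    (b : HilbertBasis ι ℝ H) (A : H →L[ℝ] H) : ℝ := Real.sqrt (hsNormSq b A)

/-- Hilbert–Schmidt inner product relative to a Hilbert basis `b`. -/
noncomputable def hsInner {H ι : Type*} [NormedAddCommGroup H] [InnerProductSpace ℝ H]
    (b : HilbertBasis ι ℝ H) (A B : H →L[ℝ] H) : ℝ := ∑' i, ⟪A (b i), B (b i)⟫

/-! For unit vectors `u, v` one has `‖u ⊗ u - v ⊗ v‖²_F = 2 (1 - ⟪u, v⟫²) = 2 sin² θ`, where `θ` is
the angle between them. With `u = s(x - t)` and `v = s(x)`, the quantity `‖x - t‖ sin θ` is the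
distance from `x - t` to the line `ℝ x`, which is at most `‖(x - t) - x‖ = ‖t‖`. This even gives
the bound with constant `2`. -/

section

variable {H : Type*} [NormedAddCommGroup H] [InnerProductSpace ℝ H]

theorem rankOne_apply (u v w : H) : rankOne u v w = ⟪v, w⟫ • u := rfl

theorem norm_rankOne_sub_rankOne_apply_sq (u v w : H) :
    ‖(rankOne u u - rankOne v v) w‖ ^ 2 =
      ‖u‖ ^ 2 * (⟪u, w⟫ * ⟪w, u⟫) + ‖v‖ ^ 2 * (⟪v, w⟫ * ⟪w, v⟫)
        - 2 * ⟪u, v⟫ * (⟪u, w⟫ * ⟪w, v⟫) := by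
  rw [sub_apply, rankOne_apply, rankOne_apply, norm_sub_sq_real,
    norm_smul, norm_smul, real_inner_smul_left, real_inner_smul_right, mul_pow, mul_pow,
    Real.norm_eq_abs, Real.norm_eq_abs, sq_abs, sq_abs, real_inner_comm w u,
    real_inner_comm w v]
  ring

theorem hasSum_norm_rankOne_sub_rankOne_apply_sq {ι : Type*} (b : HilbertBasis ι ℝ H)
    (u v : H) :
    HasSum (fun i => ‖(rankOne u u - rankOne v v) (b i)‖ ^ 2)
      (‖u‖ ^ 4 + ‖v‖ ^ 4 - 2 * ⟪u, v⟫ ^ 2) := by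
  have h := (((b.hasSum_inner_mul_inner u u).mul_left (‖u‖ ^ 2)).add
    ((b.hasSum_inner_mul_inner v v).mul_left (‖v‖ ^ 2))).sub
    ((b.hasSum_inner_mul_inner u v).mul_left (2 * ⟪u, v⟫))
  simp only [← norm_rankOne_sub_rankOne_apply_sq, real_inner_self_eq_norm_sq] at h
  rwa [show ‖u‖ ^ 4 + ‖v‖ ^ 4 - 2 * ⟪u, v⟫ ^ 2
    = ‖u‖ ^ 2 * ‖u‖ ^ 2 + ‖v‖ ^ 2 * ‖v‖ ^ 2 - 2 * ⟪u, v⟫ * ⟪u, v⟫ by ring]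

theorem hsNormSq_rankOne_sub_rankOne {ι : Type*} (b : HilbertBasis ι ℝ H) (u v : H) :
    hsNormSq b (rankOne u u - rankOne v v) = ‖u‖ ^ 4 + ‖v‖ ^ 4 - 2 * ⟪u, v⟫ ^ 2 :=
  (hasSum_norm_rankOne_sub_rankOne_apply_sq b u v).tsum_eq

theorem norm_sgn {u : H} (hu : u ≠ 0) : ‖sgn u‖ = 1 := norm_smul_inv_norm hu

theorem inner_sgn_sgn (u v : H) : ⟪sgn u, sgn v⟫ = ⟪u, v⟫ / (‖u‖ * ‖v‖) := by
  rw [sgn, sgn, real_inner_smul_left, real_inner_smul_right]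
  field_simp

theorem norm_sq_mul_norm_sq_sub_inner_sq_le (a x : H) :
    ‖a‖ ^ 2 * ‖x‖ ^ 2 - ⟪a, x⟫ ^ 2 ≤ ‖x‖ ^ 2 * ‖a - x‖ ^ 2 := by
  rw [norm_sub_sq_real]
  nlinarith [sq_nonneg (‖x‖ ^ 2 - ⟪a, x⟫)]

theorem one_sub_inner_sgn_sq_le {a x : H} (ha : a ≠ 0) (hx : x ≠ 0) :
    1 - ⟪sgn a, sgn x⟫ ^ 2 ≤ ‖a - x‖ ^ 2 / ‖a‖ ^ 2 := by
  have ha' : 0 < ‖a‖ := norm_pos_iff.mpr ha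
  rw [inner_sgn_sgn, div_pow, one_sub_div (by positivity), div_le_div_iff₀ (by positivity)
    (by positivity)]
  nlinarith [norm_sq_mul_norm_sq_sub_inner_sq_le a x, pow_pos ha' 2]

end

theorem stmt1 {H ι : Type*} [NormedAddCommGroup H] [InnerProductSpace ℝ H]
    (b : HilbertBasis ι ℝ H) (x t : H) (hx : x ≠ 0) (hxt : x - t ≠ 0) :
    hsNormSq b (rankOne (sgn (x - t)) (sgn (x - t)) - rankOne (sgn x) (sgn x))
      ≤ 4 * ‖t‖ ^ 2 / ‖x - t‖ ^ 2 := by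
  have hangle := one_sub_inner_sgn_sq_le hxt hx
  rw [sub_sub_cancel_left, norm_neg] at hangle
  have hratio : 0 ≤ ‖t‖ ^ 2 / ‖x - t‖ ^ 2 := by positivity
  calc hsNormSq b (rankOne (sgn (x - t)) (sgn (x - t)) - rankOne (sgn x) (sgn x))
      = 2 * (1 - ⟪sgn (x - t), sgn x⟫ ^ 2) := by
        rw [hsNormSq_rankOne_sub_rankOne, norm_sgn hxt, norm_sgn hx]
        ring
    _ ≤ 4 * ‖t‖ ^ 2 / ‖x - t‖ ^ 2 := by
        rw [mul_div_assoc]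
        linarith
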